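/- arXiv:0708.1992 — 2 statements merged into one kernel-verified Lean document; each statement's English description precedes it below -/
import Mathlib

section
/- Let q be nonzero with q^2 ≠ 1, and fix i ∈ Z/4Z. There exists a C-algebra homomorphism from U_q(ŝl_2) (in the alternate presentation with generators x_0^{±1}, x_1^{±1}, y_0, y_1, z_0, z_1) to the q-tetrahedron algebra ⊠_q sending x_1 ↦ x_{i,i+2}, x_1^{-1} ↦ x_{i+2,i}, y_1 ↦ x_{i+2,i+3}, z_1 ↦ x_{i+3,i}, x_0 ↦ x_{i+2,i}, x_0^{-1} ↦ x_{i,i+2}, y_0 ↦ x_{i,i+1}, z_0 ↦ x_{i+1,i+2}. -/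
noncomputable section

/-- Generators of the q-tetrahedron algebra: pairs (i,j) in (Z/4)² with j-i ∈ {1,2}. -/
def QTetGen : Type := {p : ZMod 4 × ZMod 4 // p.2 - p.1 = 1 ∨ p.2 - p.1 = 2}

/-- The free-algebra element corresponding to the generator x_{ij}. -/
noncomputable def qgen (i j : ZMod 4) (h : j - i = 1 ∨ j - i = 2) :
    FreeAlgebra ℂ QTetGen :=
  FreeAlgebra.ι ℂ (⟨(i, j), h⟩ : QTetGen)

/-- The quantum integer [3]_q = (q³ - q⁻³)/(q - q⁻¹). -/
noncomputable def qthree (q : ℂ) : ℂ := (q ^ 3 - q⁻¹ ^ 3) / (q - q⁻¹)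

/-- Defining relations of the q-tetrahedron algebra ⊠_q. -/
inductive QTetRel (q : ℂ) : FreeAlgebra ℂ QTetGen → FreeAlgebra ℂ QTetGen → Prop
  | inv (i j : ZMod 4) (h : j - i = 2) (h' : i - j = 2) :
      QTetRel q (qgen i j (Or.inr h) * qgen j i (Or.inr h')) 1
  | cross (a b c : ZMod 4) (h1 : b - a = 1 ∨ b - a = 2) (h2 : c - b = 1 ∨ c - b = 2)
      (h3 : ¬ (b - a = 2 ∧ c - b = 2)) :
      QTetRel q ((q - q⁻¹)⁻¹ •
        (q • (qgen a b h1 * qgen b c h2) - q⁻¹ • (qgen b c h2 * qgen a b h1))) 1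
  | serre (h i j k : ZMod 4) (e1 : i - h = 1) (e2 : j - i = 1) (e3 : k - j = 1) :
      QTetRel q
        (qgen h i (Or.inl e1) ^ 3 * qgen j k (Or.inl e3)
          - qthree q • (qgen h i (Or.inl e1) ^ 2 * qgen j k (Or.inl e3) * qgen h i (Or.inl e1))
          + qthree q • (qgen h i (Or.inl e1) * qgen j k (Or.inl e3) * qgen h i (Or.inl e1) ^ 2)
          - qgen j k (Or.inl e3) * qgen h i (Or.inl e1) ^ 3) 0

/-- The q-tetrahedron algebra ⊠_q. -/
noncomputable abbrev QTet (q : ℂ) := RingQuot (QTetRel q)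

/-- The standard generators x_{ij} of ⊠_q. -/
noncomputable def xg (q : ℂ) (i j : ZMod 4) (h : j - i = 1 ∨ j - i = 2) : QTet q :=
  RingQuot.mkAlgHom ℂ (QTetRel q) (qgen i j h)
/-- Generator symbols for the alternate presentation of U_q(ŝl₂). -/
inductive AltG : Type
  | x : Fin 2 → AltG
  | xinv : Fin 2 → AltG
  | y : Fin 2 → AltG
  | z : Fin 2 → AltG

noncomputable def ax (i : Fin 2) : FreeAlgebra ℂ AltG := FreeAlgebra.ι ℂ (AltG.x i)
noncomputable def axinv (i : Fin 2) : FreeAlgebra ℂ AltG := FreeAlgebra.ι ℂ (AltG.xinv i)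
noncomputable def ay (i : Fin 2) : FreeAlgebra ℂ AltG := FreeAlgebra.ι ℂ (AltG.y i)
noncomputable def az (i : Fin 2) : FreeAlgebra ℂ AltG := FreeAlgebra.ι ℂ (AltG.z i)

/-- Defining relations of the alternate (equitable-type) presentation of U_q(ŝl₂). -/
inductive AltRel (q : ℂ) : FreeAlgebra ℂ AltG → FreeAlgebra ℂ AltG → Prop
  | xxinv (i : Fin 2) : AltRel q (ax i * axinv i) 1
  | xinvx (i : Fin 2) : AltRel q (axinv i * ax i) 1
  | central (g : AltG) :
      AltRel q ((ax 0 * ax 1) * FreeAlgebra.ι ℂ g) (FreeAlgebra.ι ℂ g * (ax 0 * ax 1))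
  | xy (i : Fin 2) :
      AltRel q ((q - q⁻¹)⁻¹ • (q • (ax i * ay i) - q⁻¹ • (ay i * ax i))) 1
  | yz (i : Fin 2) :
      AltRel q ((q - q⁻¹)⁻¹ • (q • (ay i * az i) - q⁻¹ • (az i * ay i))) 1
  | zx (i : Fin 2) :
      AltRel q ((q - q⁻¹)⁻¹ • (q • (az i * ax i) - q⁻¹ • (ax i * az i))) 1
  | zy (i j : Fin 2) (h : i ≠ j) :
      AltRel q ((q - q⁻¹)⁻¹ • (q • (az i * ay j) - q⁻¹ • (ay j * az i)))
        (axinv 0 * axinv 1)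
  | serrey (i j : Fin 2) (h : i ≠ j) :
      AltRel q (ay i ^ 3 * ay j - qthree q • (ay i ^ 2 * ay j * ay i)
        + qthree q • (ay i * ay j * ay i ^ 2) - ay j * ay i ^ 3) 0
  | serrez (i j : Fin 2) (h : i ≠ j) :
      AltRel q (az i ^ 3 * az j - qthree q • (az i ^ 2 * az j * az i)
        + qthree q • (az i * az j * az i ^ 2) - az j * az i ^ 3) 0

/-- U_q(ŝl₂) in the alternate presentation. -/
noncomputable abbrev AltUq (q : ℂ) := RingQuot (AltRel q)

noncomputable def aX (q : ℂ) (i : Fin 2) : AltUq q := RingQuot.mkAlgHom ℂ (AltRel q) (ax i)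
noncomputable def aXinv (q : ℂ) (i : Fin 2) : AltUq q := RingQuot.mkAlgHom ℂ (AltRel q) (axinv i)
noncomputable def aY (q : ℂ) (i : Fin 2) : AltUq q := RingQuot.mkAlgHom ℂ (AltRel q) (ay i)
noncomputable def aZ (q : ℂ) (i : Fin 2) : AltUq q := RingQuot.mkAlgHom ℂ (AltRel q) (az i)

lemma zsub2 (i a b c : ZMod 4) (h : b - a = c) : (i + b) - (i + a) = c := by
  rw [← h]; ring

lemma zsub (i k : ZMod 4) : (i + k) - i = k := by ring

lemma zsub' (i k m : ZMod 4) (h : -k = m) : i - (i + k) = m := by rw [← h]; ring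

lemma nb1 {x y : ZMod 4} (h : x = 1) : ¬ (x = 2 ∧ y = 2) := by
  rintro ⟨h2, -⟩; rw [h] at h2; exact absurd h2 (by decide)

lemma nb2 {x y : ZMod 4} (h : y = 1) : ¬ (x = 2 ∧ y = 2) := by
  rintro ⟨-, h2⟩; rw [h] at h2; exact absurd h2 (by decide)

lemma xg_inv_one (q : ℂ) (i j : ZMod 4) (h : j - i = 2) (h' : i - j = 2) :
    xg q i j (Or.inr h) * xg q j i (Or.inr h') = 1 := by
  rw [xg, xg, ← map_mul,
    show (1 : QTet q) = RingQuot.mkAlgHom ℂ (QTetRel q) 1 from (map_one _).symm]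
  exact RingQuot.mkAlgHom_rel _ (QTetRel.inv i j h h')

lemma xg_cross (q : ℂ) (a b c : ZMod 4) (h1 : b - a = 1 ∨ b - a = 2)
    (h2 : c - b = 1 ∨ c - b = 2) (h3 : ¬ (b - a = 2 ∧ c - b = 2)) :
    (q - q⁻¹)⁻¹ • (q • (xg q a b h1 * xg q b c h2)
      - q⁻¹ • (xg q b c h2 * xg q a b h1)) = 1 := by
  have := RingQuot.mkAlgHom_rel ℂ (QTetRel.cross (q := q) a b c h1 h2 h3)
  simpa [xg, map_smul, map_sub, map_mul] using this

lemma xg_serre (q : ℂ) (h i j k : ZMod 4) (e1 : i - h = 1) (e2 : j - i = 1) (e3 : k - j = 1) :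
    xg q h i (Or.inl e1) ^ 3 * xg q j k (Or.inl e3)
      - qthree q • (xg q h i (Or.inl e1) ^ 2 * xg q j k (Or.inl e3) * xg q h i (Or.inl e1))
      + qthree q • (xg q h i (Or.inl e1) * xg q j k (Or.inl e3) * xg q h i (Or.inl e1) ^ 2)
      - xg q j k (Or.inl e3) * xg q h i (Or.inl e1) ^ 3 = 0 := by
  have := RingQuot.mkAlgHom_rel ℂ (QTetRel.serre (q := q) h i j k e1 e2 e3)
  simpa [xg, map_smul, map_sub, map_add, map_mul, map_pow] using this

/-- The map on generator symbols. -/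
noncomputable def tmap (q : ℂ) (i : ZMod 4) : AltG → QTet q
  | AltG.x j => if j = 0 then xg q (i + 2) i (Or.inr (zsub' i 2 2 (by decide)))
      else xg q i (i + 2) (Or.inr (zsub i 2))
  | AltG.xinv j => if j = 0 then xg q i (i + 2) (Or.inr (zsub i 2))
      else xg q (i + 2) i (Or.inr (zsub' i 2 2 (by decide)))
  | AltG.y j => if j = 0 then xg q i (i + 1) (Or.inl (zsub i 1))
      else xg q (i + 2) (i + 3) (Or.inl (zsub2 i 2 3 1 (by decide)))
  | AltG.z j => if j = 0 then xg q (i + 1) (i + 2) (Or.inl (zsub2 i 1 2 1 (by decide)))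
      else xg q (i + 3) i (Or.inl (zsub' i 3 1 (by decide)))

noncomputable def Fmap (q : ℂ) (i : ZMod 4) : FreeAlgebra ℂ AltG →ₐ[ℂ] QTet q :=
  FreeAlgebra.lift ℂ (tmap q i)

lemma Fmap_rel (q : ℂ) (i : ZMod 4) {a b : FreeAlgebra ℂ AltG} (hab : AltRel q a b) :
    Fmap q i a = Fmap q i b := by
  have hx01 : Fmap q i (ax 0 * ax 1) = 1 := by
    simp only [map_mul, Fmap, ax, FreeAlgebra.lift_ι_apply, tmap, if_pos, if_neg (by decide : (1 : Fin 2) ≠ 0)]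
    exact xg_inv_one q (i + 2) i (zsub' i 2 2 (by decide)) (zsub i 2)
  induction hab with
  | xxinv j =>
    fin_cases j <;>
      simp only [map_mul, map_one, Fmap, ax, axinv, FreeAlgebra.lift_ι_apply, tmap, if_pos, if_neg (by decide : (1 : Fin 2) ≠ 0)] <;> skip
    · exact xg_inv_one q (i + 2) i (zsub' i 2 2 (by decide)) (zsub i 2)
    · exact xg_inv_one q i (i + 2) (zsub i 2) (zsub' i 2 2 (by decide))
  | xinvx j =>
    fin_cases j <;>
      simp only [map_mul, map_one, Fmap, ax, axinv, FreeAlgebra.lift_ι_apply, tmap, if_pos, if_neg (by decide : (1 : Fin 2) ≠ 0)] <;> skip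
    · exact xg_inv_one q i (i + 2) (zsub i 2) (zsub' i 2 2 (by decide))
    · exact xg_inv_one q (i + 2) i (zsub' i 2 2 (by decide)) (zsub i 2)
  | central g =>
    simp only [map_mul] at hx01 ⊢
    rw [show Fmap q i (ax 0) * Fmap q i (ax 1) = 1 from by simpa [map_mul] using hx01]
    rw [one_mul, mul_one]
  | xy j =>
    fin_cases j <;>
      simp only [map_smul, map_sub, map_mul, map_one, Fmap, ax, ay,
        FreeAlgebra.lift_ι_apply, tmap, if_pos, if_neg (by decide : (1 : Fin 2) ≠ 0)] <;> skip
    · exact xg_cross q (i + 2) i (i + 1) _ _ (nb2 (zsub i 1))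
    · exact xg_cross q i (i + 2) (i + 3) _ _ (nb2 (zsub2 i 2 3 1 (by decide)))
  | yz j =>
    fin_cases j <;>
      simp only [map_smul, map_sub, map_mul, map_one, Fmap, ay, az,
        FreeAlgebra.lift_ι_apply, tmap, if_pos, if_neg (by decide : (1 : Fin 2) ≠ 0)] <;> skip
    · exact xg_cross q i (i + 1) (i + 2) _ _ (nb1 (zsub i 1))
    · exact xg_cross q (i + 2) (i + 3) i _ _ (nb1 (zsub2 i 2 3 1 (by decide)))
  | zx j =>
    fin_cases j <;>
      simp only [map_smul, map_sub, map_mul, map_one, Fmap, ax, az,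
        FreeAlgebra.lift_ι_apply, tmap, if_pos, if_neg (by decide : (1 : Fin 2) ≠ 0)] <;> skip
    · exact xg_cross q (i + 1) (i + 2) i _ _ (nb1 (zsub2 i 1 2 1 (by decide)))
    · exact xg_cross q (i + 3) i (i + 2) _ _ (nb1 (zsub' i 3 1 (by decide)))
  | zy j k hjk =>
    have hrhs : Fmap q i (axinv 0 * axinv 1) = 1 := by
      simp only [map_mul, Fmap, axinv, FreeAlgebra.lift_ι_apply, tmap]
      simp only [if_pos rfl, if_neg (by decide : (1 : Fin 2) ≠ 0)]
      exact xg_inv_one q i (i + 2) (zsub i 2) (zsub' i 2 2 (by decide))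
    rw [hrhs]
    fin_cases j <;> fin_cases k <;> first
      | exact absurd rfl hjk
      | (simp only [map_smul, map_sub, map_mul, Fmap, ay, az,
          FreeAlgebra.lift_ι_apply, tmap, if_pos, if_neg (by decide : (1 : Fin 2) ≠ 0)]
         first
           | exact xg_cross q (i + 1) (i + 2) (i + 3) _ _ (nb1 (zsub2 i 1 2 1 (by decide)))
           | exact xg_cross q (i + 3) i (i + 1) _ _ (nb1 (zsub' i 3 1 (by decide))))
  | serrey j k hjk =>
    fin_cases j <;> fin_cases k <;> first
      | exact absurd rfl hjk
      | (simp only [map_smul, map_sub, map_add, map_mul, map_pow, map_zero, Fmap, ay,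
          FreeAlgebra.lift_ι_apply, tmap, if_pos, if_neg (by decide : (1 : Fin 2) ≠ 0)]
         first
           | exact xg_serre q i (i + 1) (i + 2) (i + 3) (zsub i 1)
               (zsub2 i 1 2 1 (by decide)) (zsub2 i 2 3 1 (by decide))
           | exact xg_serre q (i + 2) (i + 3) i (i + 1) (zsub2 i 2 3 1 (by decide))
               (zsub' i 3 1 (by decide)) (zsub i 1))
  | serrez j k hjk =>
    fin_cases j <;> fin_cases k <;> first
      | exact absurd rfl hjk
      | (simp only [map_smul, map_sub, map_add, map_mul, map_pow, map_zero, Fmap, az,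
          FreeAlgebra.lift_ι_apply, tmap, if_pos, if_neg (by decide : (1 : Fin 2) ≠ 0)]
         first
           | exact xg_serre q (i + 1) (i + 2) (i + 3) i (zsub2 i 1 2 1 (by decide))
               (zsub2 i 2 3 1 (by decide)) (zsub' i 3 1 (by decide))
           | exact xg_serre q (i + 3) i (i + 1) (i + 2) (zsub' i 3 1 (by decide))
               (zsub i 1) (zsub2 i 1 2 1 (by decide)))

theorem stmt3 (q : ℂ) (hq : q ≠ 0) (hq2 : q ^ 2 ≠ 1) (i : ZMod 4) :
    ∃ ψ : AltUq q →ₐ[ℂ] QTet q,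
      ψ (aX q 1) = xg q i (i + 2) (Or.inr (zsub i 2)) ∧
      ψ (aXinv q 1) = xg q (i + 2) i (Or.inr (zsub' i 2 2 (by decide))) ∧
      ψ (aY q 1) = xg q (i + 2) (i + 3) (Or.inl (zsub2 i 2 3 1 (by decide))) ∧
      ψ (aZ q 1) = xg q (i + 3) i (Or.inl (zsub' i 3 1 (by decide))) ∧
      ψ (aX q 0) = xg q (i + 2) i (Or.inr (zsub' i 2 2 (by decide))) ∧
      ψ (aXinv q 0) = xg q i (i + 2) (Or.inr (zsub i 2)) ∧
      ψ (aY q 0) = xg q i (i + 1) (Or.inl (zsub i 1)) ∧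
      ψ (aZ q 0) = xg q (i + 1) (i + 2) (Or.inl (zsub2 i 1 2 1 (by decide))) := by

  refine ⟨RingQuot.liftAlgHom ℂ ⟨Fmap q i, fun a b hab => Fmap_rel q i hab⟩,
    ?_, ?_, ?_, ?_, ?_, ?_, ?_, ?_⟩ <;>
  · simp only [aX, aXinv, aY, aZ, RingQuot.liftAlgHom_mkAlgHom_apply, Fmap, ax, axinv, ay, az,
      FreeAlgebra.lift_ι_apply, tmap, if_pos, if_neg (by decide : (1 : Fin 2) ≠ 0)]
end
end

section
/- Let Γ be a Q-polynomial distance-regular graph with diameter D ≥ 3, fix a base vertex x, and for −1 ≤ i,j ≤ D define V^{↓↓}_{i,j} = (E_0*V + ⋯ + E_i*V) ∩ (E_0V + ⋯ + E_jV) (interpreted as 0 when i = −1 or j = −1). Let Ṽ^{↓↓}_{i,j} be the orthogonal complement of V^{↓↓}_{i−1,j} + V^{↓↓}_{i,j−1} inside V^{↓↓}_{i,j}. Then V = Σ_{i=0}^D Σ_{j=0}^D Ṽ^{↓↓}_{i,j} is a direct sum. -/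
noncomputable section
open Matrix

/-- The i-th distance matrix of a graph G. -/
noncomputable def Amat {X : Type} [Fintype X] [DecidableEq X] (G : SimpleGraph X)
    (i : ℕ) : Matrix X X ℂ :=
  Matrix.of fun x y => if G.dist x y = i then 1 else 0

/-- The i-th dual idempotent of G with respect to the base vertex x0. -/
noncomputable def Estar {X : Type} [Fintype X] [DecidableEq X] (G : SimpleGraph X)
    (x0 : X) (i : ℕ) : Matrix X X ℂ :=
  Matrix.diagonal fun y => if G.dist x0 y = i then 1 else 0
/-- The subconstituent (Terwilliger) algebra T = T(x0), generated by the
distance matrices and the dual idempotents. -/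
noncomputable def Talg {X : Type} [Fintype X] [DecidableEq X] (G : SimpleGraph X)
    (x0 : X) (D : ℕ) : Subalgebra ℂ (Matrix X X ℂ) :=
  Algebra.adjoin ℂ
    ((Set.range fun i : Fin (D + 1) => Amat G (i : ℕ)) ∪
      (Set.range fun i : Fin (D + 1) => Estar G x0 (i : ℕ)))

/-- W is a module for the subalgebra T of matrices. -/
def IsTMod {X : Type} [Fintype X] [DecidableEq X] (T : Subalgebra ℂ (Matrix X X ℂ))
    (W : Submodule ℂ (X → ℂ)) : Prop :=
  ∀ B ∈ T, ∀ v ∈ W, B.mulVec v ∈ W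

/-- W is an irreducible T-module. -/
def IsIrredTMod {X : Type} [Fintype X] [DecidableEq X] (T : Subalgebra ℂ (Matrix X X ℂ))
    (W : Submodule ℂ (X → ℂ)) : Prop :=
  IsTMod T W ∧ W ≠ ⊥ ∧
    ∀ U : Submodule ℂ (X → ℂ), U ≤ W → IsTMod T U → U = ⊥ ∨ U = W

/-- The Hermitean inner product ⟨u,v⟩ = uᵗ v̄ on ℂ^X. -/
noncomputable def herm {X : Type} [Fintype X] (u v : X → ℂ) : ℂ :=
  ∑ x, u x * (starRingEnd ℂ) (v x)

/-- The orthogonal complement of a subspace of ℂ^X with respect to `herm`. -/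
noncomputable def orthoC {X : Type} [Fintype X] (W : Submodule ℂ (X → ℂ)) :
    Submodule ℂ (X → ℂ) where
  carrier := {v | ∀ w ∈ W, herm v w = 0}
  add_mem' := by
    intro a b ha hb w hw
    have h1 := ha w hw
    have h2 := hb w hw
    simp only [herm, Pi.add_apply, add_mul] at *
    rw [Finset.sum_add_distrib, h1, h2, add_zero]
  zero_mem' := by
    intro w hw
    simp [herm]
  smul_mem' := by
    intro c a ha w hw
    have h1 := ha w hw
    simp only [herm, Pi.smul_apply, smul_eq_mul, mul_assoc, ← Finset.mul_sum] at *
    rw [h1, mul_zero]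
/-- The subspace (E₀*V + ⋯ + E_i*V) ∩ (E₀V + ⋯ + E_jV) of the (↓,↓)-split decomposition. -/
noncomputable def Vdd {X : Type} [Fintype X] [DecidableEq X] (G : SimpleGraph X)
    (x0 : X) (E : ℕ → Matrix X X ℂ) (i j : ℕ) : Submodule ℂ (X → ℂ) :=
  (⨆ h ∈ Finset.range (i + 1), LinearMap.range (Estar G x0 h).mulVecLin) ⊓
    (⨆ h ∈ Finset.range (j + 1), LinearMap.range (E h).mulVecLin)

/-- The subspace (E₀*V + ⋯ + E_i*V) ∩ (E_DV + ⋯ + E_{D-j}V) of the (↓,↑)-split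
decomposition. -/
noncomputable def Vdu {X : Type} [Fintype X] [DecidableEq X] (G : SimpleGraph X)
    (x0 : X) (D : ℕ) (E : ℕ → Matrix X X ℂ) (i j : ℕ) : Submodule ℂ (X → ℂ) :=
  (⨆ h ∈ Finset.range (i + 1), LinearMap.range (Estar G x0 h).mulVecLin) ⊓
    (⨆ h ∈ Finset.range (j + 1), LinearMap.range (E (D - h)).mulVecLin)

/-- The summand Ṽ^{↓↓}_{i,j}: the orthogonal complement of
V^{↓↓}_{i-1,j} + V^{↓↓}_{i,j-1} inside V^{↓↓}_{i,j}. -/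
noncomputable def VddTilde {X : Type} [Fintype X] [DecidableEq X] (G : SimpleGraph X)
    (x0 : X) (E : ℕ → Matrix X X ℂ) (i j : ℕ) : Submodule ℂ (X → ℂ) :=
  Vdd G x0 E i j ⊓ orthoC
    ((if i = 0 then ⊥ else Vdd G x0 E (i - 1) j) ⊔
      (if j = 0 then ⊥ else Vdd G x0 E i (j - 1)))

/-- The summand Ṽ^{↓↑}_{i,j}: the orthogonal complement of
V^{↓↑}_{i-1,j} + V^{↓↑}_{i,j-1} inside V^{↓↑}_{i,j}. -/
noncomputable def VduTilde {X : Type} [Fintype X] [DecidableEq X] (G : SimpleGraph X)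
    (x0 : X) (D : ℕ) (E : ℕ → Matrix X X ℂ) (i j : ℕ) : Submodule ℂ (X → ℂ) :=
  Vdu G x0 D E i j ⊓ orthoC
    ((if i = 0 then ⊥ else Vdu G x0 D E (i - 1) j) ⊔
      (if j = 0 then ⊥ else Vdu G x0 D E i (j - 1)))

/-! Only two flags of subspaces enter: `Aᵢ = E₀*V + ⋯ + Eᵢ*V` and `Bⱼ = E₀V + ⋯ + EⱼV`, both
ending in `V`. Writing `V_{ij} = Aᵢ ∩ Bⱼ`, the two lower neighbours of `V_{ij}` meet in
`V_{i-1,j-1}`, so by the modular law `dim Ṽ_{ij}` is the second difference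
`d_{ij} - d_{i-1,j} - d_{i,j-1} + d_{i-1,j-1}` of `d_{ij} = dim V_{ij}`, and these telescope to
`dim V`. Since `V_{ij} = (V_{i-1,j} + V_{i,j-1}) + Ṽ_{ij}`, induction on `i + j` shows that the
`Ṽ_{ij}` span `V`; a spanning family whose dimensions add up to `dim V` is independent. -/

open Module

theorem iSupIndep_of_iSup_eq_top_of_sum_finrank_eq {K V ι : Type*} [DivisionRing K]
    [AddCommGroup V] [Module K V] [FiniteDimensional K V] [Fintype ι] [DecidableEq ι]
    (W : ι → Submodule K V) (htop : iSup W = ⊤)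
    (hrank : ∑ i, finrank K (W i) = finrank K V) : iSupIndep W := by
  set f := DFinsupp.lsum ℕ fun i => (W i).subtype
  have hsurj : Function.Surjective f := by
    rw [← LinearMap.range_eq_top, ← Submodule.iSup_eq_range_dfinsupp_lsum, htop]
  have hdim : finrank K (Π₀ i, W i) = finrank K V := by
    rw [← hrank]; exact finrank_directSum K fun i => W i
  exact iSupIndep_of_dfinsupp_lsum_injective W
    ((LinearMap.injective_iff_surjective_of_finrank_eq_finrank hdim).2 hsurj)

theorem Matrix.iSup_range_mulVecLin_eq_top_of_sum_eq_one {R X ι : Type*} [CommSemiring R]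
    [Fintype X] [DecidableEq X] (s : Finset ι) (M : ι → Matrix X X R) (h : ∑ k ∈ s, M k = 1) :
    ⨆ k ∈ s, LinearMap.range (M k).mulVecLin = ⊤ := by
  refine eq_top_iff.2 fun v _ => ?_
  rw [← Matrix.one_mulVec v, ← h, Matrix.sum_mulVec]
  exact Submodule.sum_mem _ fun k hk =>
    Submodule.mem_iSup_of_mem k (Submodule.mem_iSup_of_mem hk ⟨v, rfl⟩)

section Orthogonal

variable {X : Type} [Fintype X]

def euclideanEquiv (X : Type) [Fintype X] : (X → ℂ) ≃ₗ[ℂ] EuclideanSpace ℂ X :=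
  (WithLp.linearEquiv 2 ℂ (X → ℂ)).symm

theorem herm_eq_inner (u v : X → ℂ) :
    herm u v = inner ℂ (euclideanEquiv X v) (euclideanEquiv X u) := by
  simp [herm, PiLp.inner_apply, RCLike.inner_apply, euclideanEquiv, WithLp.linearEquiv]

theorem map_orthoC (U : Submodule ℂ (X → ℂ)) :
    (orthoC U).map (euclideanEquiv X).toLinearMap = (U.map (euclideanEquiv X).toLinearMap)ᗮ := by
  ext y
  simp only [Submodule.mem_map, Submodule.mem_orthogonal, LinearEquiv.coe_coe]
  constructor
  · rintro ⟨v, hv, rfl⟩ u ⟨w, hw, rfl⟩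
    rw [← herm_eq_inner]
    exact hv w hw
  · intro h
    refine ⟨(euclideanEquiv X).symm y, fun w hw => ?_, by simp⟩
    rw [herm_eq_inner, LinearEquiv.apply_symm_apply]
    exact h _ ⟨w, hw, rfl⟩

theorem sup_inf_orthoC_eq {U W : Submodule ℂ (X → ℂ)} (h : U ≤ W) :
    U ⊔ (W ⊓ orthoC U) = W := by
  have hinj := (euclideanEquiv X).injective
  apply Submodule.map_injective_of_injective hinj
  rw [Submodule.map_sup, Submodule.map_inf _ hinj, map_orthoC, inf_comm]
  exact Submodule.sup_orthogonal_inf_of_hasOrthogonalProjection (Submodule.map_mono h)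

theorem finrank_add_finrank_inf_orthoC {U W : Submodule ℂ (X → ℂ)} (h : U ≤ W) :
    finrank ℂ U + finrank ℂ ↥(W ⊓ orthoC U) = finrank ℂ W := by
  have hinj := (euclideanEquiv X).injective
  have := Submodule.finrank_add_inf_finrank_orthogonal
    (Submodule.map_mono (f := (euclideanEquiv X).toLinearMap) h)
  rw [← map_orthoC, ← Submodule.map_inf _ hinj, inf_comm] at this
  simpa only [LinearEquiv.finrank_map_eq] using this

end Orthogonal

theorem monotone_biSup_range_succ {α : Type*} [CompleteLattice α] (f : ℕ → α) : Monotone fun i => ⨆ k ∈ Finset.range (i + 1), f k :=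
  fun _ _ hij => biSup_mono fun _ hk =>
    Finset.mem_range.2 ((Finset.mem_range.1 hk).trans_le (Nat.succ_le_succ hij))

section Flags

variable {X : Type} (A B : ℕ → Submodule ℂ (X → ℂ))

def flagBelow (i j : ℕ) : Submodule ℂ (X → ℂ) :=
  if i = 0 then ⊥ else A (i - 1) ⊓ B j

def gridLower (i j : ℕ) : Submodule ℂ (X → ℂ) :=
  flagBelow A B i j ⊔ if j = 0 then ⊥ else A i ⊓ B (j - 1)

def gridTilde [Fintype X] (i j : ℕ) : Submodule ℂ (X → ℂ) :=
  A i ⊓ B j ⊓ orthoC (gridLower A B i j)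

theorem flagBelow_zero (j : ℕ) : flagBelow A B 0 j = ⊥ := if_pos rfl

theorem flagBelow_succ (i j : ℕ) : flagBelow A B (i + 1) j = A i ⊓ B j := if_neg i.succ_ne_zero

theorem gridLower_zero (i : ℕ) : gridLower A B i 0 = flagBelow A B i 0 := by
  simp [gridLower]

theorem gridLower_succ (i j : ℕ) :
    gridLower A B i (j + 1) = flagBelow A B i (j + 1) ⊔ A i ⊓ B j := by
  simp [gridLower]

variable {A B}

theorem gridLower_le (hA : Monotone A) (hB : Monotone B) (i j : ℕ) :
    gridLower A B i j ≤ A i ⊓ B j := by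
  unfold gridLower flagBelow
  refine sup_le ?_ ?_ <;> split_ifs
  · exact bot_le
  · exact inf_le_inf_right _ (hA (Nat.sub_le i 1))
  · exact bot_le
  · exact inf_le_inf_left _ (hB (Nat.sub_le j 1))

theorem gridLower_sup_gridTilde [Fintype X] (hA : Monotone A) (hB : Monotone B) (i j : ℕ) :
    gridLower A B i j ⊔ gridTilde A B i j = A i ⊓ B j :=
  sup_inf_orthoC_eq (gridLower_le hA hB i j)

theorem finrank_gridLower_add_finrank_gridTilde [Fintype X] (hA : Monotone A) (hB : Monotone B)
    (i j : ℕ) :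
    finrank ℂ (gridLower A B i j) + finrank ℂ (gridTilde A B i j) = finrank ℂ ↥(A i ⊓ B j) :=
  finrank_add_finrank_inf_orthoC (gridLower_le hA hB i j)

theorem flagBelow_succ_inf (hA : Monotone A) (hB : Monotone B) (i j : ℕ) :
    flagBelow A B i (j + 1) ⊓ (A i ⊓ B j) = flagBelow A B i j := by
  unfold flagBelow
  split_ifs
  · exact bot_inf_eq _
  · rw [inf_inf_inf_comm, inf_eq_left.2 (hA (Nat.sub_le i 1)), inf_eq_right.2 (hB j.le_succ)]

theorem sum_finrank_gridTilde_row [Fintype X] (hA : Monotone A) (hB : Monotone B) (i b : ℕ) :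
    ∑ j ∈ Finset.range (b + 1), finrank ℂ (gridTilde A B i j) + finrank ℂ (flagBelow A B i b) =
      finrank ℂ ↥(A i ⊓ B b) := by
  induction b with
  | zero =>
    have h := finrank_gridLower_add_finrank_gridTilde hA hB i 0
    rw [gridLower_zero] at h
    rw [Finset.sum_range_one]
    omega
  | succ b ih =>
    have h := finrank_gridLower_add_finrank_gridTilde hA hB i (b + 1)
    have hmod := Submodule.finrank_sup_add_finrank_inf_eq (flagBelow A B i (b + 1)) (A i ⊓ B b)
    rw [gridLower_succ] at h
    rw [flagBelow_succ_inf hA hB] at hmod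
    rw [Finset.sum_range_succ]
    omega

theorem sum_finrank_gridTilde [Fintype X] (hA : Monotone A) (hB : Monotone B) (a b : ℕ) :
    ∑ i ∈ Finset.range (a + 1), ∑ j ∈ Finset.range (b + 1), finrank ℂ (gridTilde A B i j) =
      finrank ℂ ↥(A a ⊓ B b) := by
  induction a with
  | zero =>
    have h := sum_finrank_gridTilde_row hA hB 0 b
    rw [flagBelow_zero, finrank_bot, add_zero] at h
    rwa [Finset.sum_range_one]
  | succ a ih =>
    have h := sum_finrank_gridTilde_row hA hB (a + 1) b
    rw [flagBelow_succ] at h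
    rw [Finset.sum_range_succ, ih]
    omega

theorem inf_le_iSup_gridTilde [Fintype X] (hA : Monotone A) (hB : Monotone B) (D : ℕ)
    (i j : ℕ) (hi : i ≤ D) (hj : j ≤ D) :
    A i ⊓ B j ≤ ⨆ k : Fin (D + 1) × Fin (D + 1), gridTilde A B k.1 k.2 := by
  rw [← gridLower_sup_gridTilde hA hB i j]
  refine sup_le (sup_le ?_ ?_) (le_iSup (fun k : Fin (D + 1) × Fin (D + 1) =>
    gridTilde A B k.1 k.2) (⟨i, by omega⟩, ⟨j, by omega⟩))
  · unfold flagBelow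
    split_ifs
    · exact bot_le
    · exact inf_le_iSup_gridTilde hA hB D (i - 1) j (by omega) hj
  · split_ifs
    · exact bot_le
    · exact inf_le_iSup_gridTilde hA hB D i (j - 1) hi (by omega)
termination_by i + j

theorem isInternal_gridTilde [Fintype X] (hA : Monotone A) (hB : Monotone B) (D : ℕ)
    (hAD : A D = ⊤) (hBD : B D = ⊤) :
    DirectSum.IsInternal fun k : Fin (D + 1) × Fin (D + 1) => gridTilde A B k.1 k.2 := by
  have htop : ⨆ k : Fin (D + 1) × Fin (D + 1), gridTilde A B k.1 k.2 = ⊤ :=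
    top_unique (by simpa [hAD, hBD] using inf_le_iSup_gridTilde hA hB D D D le_rfl le_rfl)
  have hrank : ∑ k : Fin (D + 1) × Fin (D + 1), finrank ℂ (gridTilde A B k.1 k.2) =
      finrank ℂ (X → ℂ) := by
    have h := sum_finrank_gridTilde hA hB D D
    rw [hAD, hBD, top_inf_eq, finrank_top] at h
    simpa only [Finset.sum_range, Fintype.sum_prod_type] using h
  exact (DirectSum.isInternal_submodule_iff_iSupIndep_and_iSup_eq_top _).2
    ⟨iSupIndep_of_iSup_eq_top_of_sum_finrank_eq _ htop hrank, htop⟩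

end Flags

theorem sum_Estar_eq_one {X : Type} [Fintype X] [DecidableEq X] (G : SimpleGraph X) (x0 : X)
    (D : ℕ) (hdiam : ∀ y, G.dist x0 y ≤ D) :
    ∑ h ∈ Finset.range (D + 1), Estar G x0 h = 1 := by
  ext y z
  rw [Matrix.sum_apply]
  by_cases hyz : y = z
  · simp [Estar, hyz, Matrix.one_apply, Nat.lt_succ_of_le (hdiam z)]
  · simp [Estar, hyz]

theorem stmt13_general
    {X : Type} [Fintype X] [DecidableEq X] (G : SimpleGraph X)
    (D : ℕ)
    (hdiam : ∀ x y : X, G.dist x y ≤ D)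
    (E : ℕ → Matrix X X ℂ)
    (hEsum : ∑ i ∈ Finset.range (D + 1), E i = 1)
    (x0 : X)
    :
    iSupIndep
      (fun ij : Fin (D + 1) × Fin (D + 1) => VddTilde G x0 E (ij.1 : ℕ) (ij.2 : ℕ)) ∧
    (⨆ ij : Fin (D + 1) × Fin (D + 1), VddTilde G x0 E (ij.1 : ℕ) (ij.2 : ℕ)) = ⊤ := by
  -- `VddTilde G x0 E` is `gridTilde A B` by definition, for the flags
  -- `A i = E₀*V + ⋯ + Eᵢ*V` and `B j = E₀V + ⋯ + EⱼV`.
  have hEstar := Matrix.iSup_range_mulVecLin_eq_top_of_sum_eq_one _ _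
    (sum_Estar_eq_one G x0 D (hdiam x0))
  have hE := Matrix.iSup_range_mulVecLin_eq_top_of_sum_eq_one _ _ hEsum
  exact (DirectSum.isInternal_submodule_iff_iSupIndep_and_iSup_eq_top _).1
    (isInternal_gridTilde (monotone_biSup_range_succ _) (monotone_biSup_range_succ _) D hEstar hE)

theorem stmt13
    {X : Type} [Fintype X] [DecidableEq X] (G : SimpleGraph X) (hconn : G.Connected)
    (D : ℕ) (hD : 3 ≤ D)
    (hdiam : ∀ x y : X, G.dist x y ≤ D) (hdiam' : ∃ x y : X, G.dist x y = D)
    (p : ℕ → ℕ → ℕ → ℕ)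
    (hp : ∀ (h i j : ℕ) (x y : X), G.dist x y = h →
      p h i j = Nat.card {z : X // G.dist x z = i ∧ G.dist z y = j})
    (E : ℕ → Matrix X X ℂ)
    (hE0 : E 0 = (Fintype.card X : ℂ)⁻¹ • Matrix.of (fun _ _ => (1 : ℂ)))
    (hEsum : ∑ i ∈ Finset.range (D + 1), E i = 1)
    (hEmul : ∀ i j : ℕ, i ≤ D → j ≤ D → E i * E j = if i = j then E i else 0)
    (hEsymm : ∀ i : ℕ, i ≤ D → (E i)ᵀ = E i)
    (hEreal : ∀ (i : ℕ), i ≤ D → ∀ x y : X, (E i x y).im = 0)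
    (hEne : ∀ i : ℕ, i ≤ D → E i ≠ 0)
    (hEM : ∀ i : ℕ, i ≤ D → E i ∈ Algebra.adjoin ℂ {Amat G 1})
    (θ : ℕ → ℂ)
    (hθ : Amat G 1 = ∑ i ∈ Finset.range (D + 1), θ i • E i)
    (qk : ℕ → ℕ → ℕ → ℂ)
    (hqk : ∀ i j : ℕ, i ≤ D → j ≤ D →
      Matrix.hadamard (E i) (E j) =
        (Fintype.card X : ℂ)⁻¹ • ∑ h ∈ Finset.range (D + 1), qk h i j • E h)
    (hQpoly : ∀ h i j : ℕ, h ≤ D → i ≤ D → j ≤ D →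
      ((i + j < h ∨ h + j < i ∨ h + i < j) → qk h i j = 0) ∧
      ((h = i + j ∨ i = h + j ∨ j = h + i) → qk h i j ≠ 0))
    (x0 : X) (θs : ℕ → ℂ)
    (hθs : Matrix.diagonal (fun y => (Fintype.card X : ℂ) * E 1 x0 y) =
      ∑ i ∈ Finset.range (D + 1), θs i • Estar G x0 i)
    :
    iSupIndep
      (fun ij : Fin (D + 1) × Fin (D + 1) => VddTilde G x0 E (ij.1 : ℕ) (ij.2 : ℕ)) ∧
    (⨆ ij : Fin (D + 1) × Fin (D + 1), VddTilde G x0 E (ij.1 : ℕ) (ij.2 : ℕ)) = ⊤ :=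
  stmt13_general G D hdiam E hEsum x0
end
end
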